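/- arXiv:2202.05914 — 5 statements merged into one kernel-verified Lean document; each statement's English description precedes it below -/
import Mathlib

section
/- Let ≤ be a well-order on W and let Π be a ≤-compatible term-rewriting system on V = W →₀ k. Then Π is terminating: there is no infinite sequence f₀ →_Π f₁ →_Π f₂ →_Π ⋯ in V; equivalently, the converse of the one-step rewriting relation →_Π is a well-founded relation on V. -/
/-!
A rewriting step `f → g` deletes the monomial `t` from the support of `f` and may only add
monomials smaller than `t`. Hence the support of `g` is smaller than that of `f` in the
Dershowitz–Manna multiset extension of `<`, which is well-founded because `<` is.
-/

/-- One-step rewriting relation of a term-rewriting system `S ⊆ W × (W →₀ k)`: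
`f →_S g` iff there is a rule `(t, v) ∈ S` with `t ∈ supp f` and
`g = f - f t • δ_t + f t • v`. -/
def RewStep {k W : Type*} [Field k] (S : Set (W × (W →₀ k))) (f g : W →₀ k) : Prop :=
  ∃ t v, (t, v) ∈ S ∧ f t ≠ 0 ∧ g = f - Finsupp.single t (f t) + f t • v

/-- A rewriting system is `≤`-compatible if every monomial in the support of a
right-hand side is strictly smaller than the left-hand side. -/
def RewCompatible {k W : Type*} [Field k] [LinearOrder W] (S : Set (W × (W →₀ k))) : Prop :=
  ∀ p ∈ S, ∀ w ∈ (p.2 : W →₀ k).support, w < p.1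

theorem Finset.val_eq_inter_add_sdiff {α : Type*} [DecidableEq α] (s t : Finset α) :
    s.val = (s ∩ t).val + (s \ t).val := by
  rw [← Finset.disjUnion_val _ _ (Finset.disjoint_sdiff_inter s t).symm,
    Finset.disjUnion_eq_union, Finset.union_comm, Finset.sdiff_union_inter]

theorem Finset.isDershowitzMannaLT_val {α : Type*} [Preorder α] [DecidableEq α]
    {s s' : Finset α} {t : α} (hts : t ∈ s) (hts' : t ∉ s') (hlt : ∀ w ∈ s', w ∉ s → w < t) :
    Multiset.IsDershowitzMannaLT s'.val s.val := by
  refine ⟨(s' ∩ s).val, (s' \ s).val, (s \ s').val, ?_, s'.val_eq_inter_add_sdiff s, ?_, ?_⟩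
  · exact mt Finset.val_eq_zero.1 (Finset.ne_empty_of_mem (Finset.mem_sdiff.2 ⟨hts, hts'⟩))
  · rw [Finset.inter_comm, ← Finset.val_eq_inter_add_sdiff]
  · intro w hw
    obtain ⟨hws', hws⟩ := Finset.mem_sdiff.1 hw
    exact ⟨t, Finset.mem_sdiff.2 ⟨hts, hts'⟩, hlt w hws' hws⟩

theorem Finsupp.support_sub_single_add_smul_subset {ι R M : Type*} [DecidableEq ι]
    [AddGroup M] [SMulZeroClass R M] (f v : ι →₀ M) (t : ι) (c : R) :
    (f - Finsupp.single t (f t) + c • v).support ⊆ f.support.erase t ∪ v.support := by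
  rw [← Finsupp.erase_eq_sub_single, ← Finsupp.support_erase]
  exact Finsupp.support_add.trans (Finset.union_subset_union_right Finsupp.support_smul)

section

variable {k W : Type*} [Field k] [LinearOrder W] {S : Set (W × (W →₀ k))}

theorem RewStep.isDershowitzMannaLT_support (hS : RewCompatible S) {f g : W →₀ k}
    (h : RewStep S f g) : Multiset.IsDershowitzMannaLT g.support.val f.support.val := by
  classical
  obtain ⟨t, v, hmem, hft, rfl⟩ := h
  have hvt : ∀ w ∈ v.support, w < t := hS (t, v) hmem
  have hsub := Finsupp.support_sub_single_add_smul_subset f v t (f t)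
  refine Finset.isDershowitzMannaLT_val (Finsupp.mem_support_iff.2 hft) (fun ht => ?_) ?_
  · rcases Finset.mem_union.1 (hsub ht) with ht | ht
    · exact Finset.notMem_erase t _ ht
    · exact lt_irrefl t (hvt t ht)
  · intro w hw hwf
    rcases Finset.mem_union.1 (hsub hw) with hw | hw
    · exact absurd (Finset.mem_of_mem_erase hw) hwf
    · exact hvt w hw

theorem RewStep.wellFounded_flip [WellFoundedLT W] (hS : RewCompatible S) :
    WellFounded (fun g f : W →₀ k => RewStep S f g) :=
  Subrelation.wf (fun h => h.isDershowitzMannaLT_support hS)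
    (InvImage.wf (fun f : W →₀ k => f.support.val) Multiset.wellFounded_isDershowitzMannaLT)

end

/-- A `≤`-compatible rewriting system over a well-ordered set `W` is terminating:
there is no infinite chain of one-step rewritings; equivalently, the converse of
the one-step rewriting relation is well-founded. -/
theorem rewriting_terminating {k W : Type*} [Field k] [LinearOrder W] [WellFoundedLT W]
    (S : Set (W × (W →₀ k))) (hS : RewCompatible S) :
    (¬ ∃ f : ℕ → (W →₀ k), ∀ n, RewStep S (f n) (f (n + 1))) ∧
      WellFounded (fun g f : W →₀ k => RewStep S f g) := by
  have hwf := RewStep.wellFounded_flip (k := k) hS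
  exact ⟨fun ⟨f, hf⟩ => (wellFounded_iff_isEmpty_descending_chain.1 hwf).false ⟨f, hf⟩, hwf⟩
end

section
/- Let ≤ be a well-order on W and let Π be a ≤-compatible term-rewriting system on V = W →₀ k. Then V = k·Irr(Π) + I_Π, i.e., every f ∈ V is the sum of an element of k·Irr(Π) and an element of I_Π. -/
/-- The linear span `I_S` of the elements `δ_t - v` for the rules `(t, v)` of `S`. -/
noncomputable def RewIdeal {k W : Type*} [Field k] (S : Set (W × (W →₀ k))) : Submodule k (W →₀ k) :=
  Submodule.span k {x : W →₀ k | ∃ p ∈ S, x = Finsupp.single p.1 (1 : k) - p.2}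

/-- `Irr(S)`: the set of basis elements that are not the left-hand side of any rule. -/
def RewIrr {k W : Type*} [Field k] (S : Set (W × (W →₀ k))) : Set W :=
  {w | ∀ v, (w, v) ∉ S}

/-- `k·Irr(S)`: the linear span of the irreducible basis elements. -/
noncomputable def RewIrrSpan {k W : Type*} [Field k] (S : Set (W × (W →₀ k))) : Submodule k (W →₀ k) :=
  Submodule.span k ((fun w => Finsupp.single w (1 : k)) '' RewIrr S)

/-! By well-founded induction every basis vector `δ_w` lies in `k·Irr(S) + I_S`: either `w` is
irreducible, or some rule `w → v` gives `δ_w = (δ_w - v) + v` where, by compatibility, `v` is a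
combination of smaller basis vectors. -/

theorem Finsupp.mem_of_forall_single_one_mem {R α : Type*} [Semiring R]
    {M : Submodule R (α →₀ R)} {f : α →₀ R} (h : ∀ a ∈ f.support, Finsupp.single a 1 ∈ M) :
    f ∈ M := by
  have hf : f ∈ Finsupp.supported R R (f.support : Set α) :=
    (Finsupp.mem_supported R f).2 subset_rfl
  rw [Finsupp.supported_eq_span_single] at hf
  exact Submodule.span_le.2 (Set.image_subset_iff.2 h) hf

theorem single_one_mem_rewIrrSpan_sup_rewIdeal {k W : Type*} [Field k] [LinearOrder W]
    [WellFoundedLT W] {S : Set (W × (W →₀ k))} (hS : RewCompatible S) (w : W) :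
    Finsupp.single w 1 ∈ RewIrrSpan S ⊔ RewIdeal S := by
  induction w using WellFoundedLT.induction with
  | ind w ih =>
    by_cases hw : w ∈ RewIrr S
    · exact Submodule.mem_sup_left (Submodule.subset_span ⟨w, hw, rfl⟩)
    obtain ⟨v, hv⟩ : ∃ v, (w, v) ∈ S := by simpa [RewIrr] using hw
    have hrule : Finsupp.single w 1 - v ∈ RewIdeal S := Submodule.subset_span ⟨(w, v), hv, rfl⟩
    have hrhs : v ∈ RewIrrSpan S ⊔ RewIdeal S :=
      Finsupp.mem_of_forall_single_one_mem fun u hu => ih u (hS (w, v) hv u hu)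
    simpa using Submodule.add_mem _ (Submodule.mem_sup_right hrule) hrhs

/-- For a `≤`-compatible rewriting system over a well-ordered set,
`V = k·Irr(S) + I_S`. -/
theorem span_irr_sup_ideal_eq_top {k W : Type*} [Field k] [LinearOrder W] [WellFoundedLT W]
    (S : Set (W × (W →₀ k))) (hS : RewCompatible S) :
    RewIrrSpan S ⊔ RewIdeal S = ⊤ :=
  eq_top_iff.2 fun _ _ =>
    Finsupp.mem_of_forall_single_one_mem fun w _ => single_one_mem_rewIrrSpan_sup_rewIdeal hS w
end

section
/- Let ≤ be a well-order on W and let Π be a ≤-compatible term-rewriting system on V = W →₀ k. If Π is confluent, then for every f ∈ V one has f ∈ I_Π if and only if f →*_Π 0. -/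
/-- Confluence: any two rewritings of a common element are joinable. -/
def RewConfluent {k W : Type*} [Field k] (S : Set (W × (W →₀ k))) : Prop :=
  ∀ f g₁ g₂ : W →₀ k, Relation.ReflTransGen (RewStep S) f g₁ →
    Relation.ReflTransGen (RewStep S) f g₂ →
      ∃ h, Relation.ReflTransGen (RewStep S) g₁ h ∧ Relation.ReflTransGen (RewStep S) g₂ h

/-!
Rewriting `f` at `t` with the rule `(t, v)` subtracts `f t • (δ_t - v)`, so `f →* g` gives
`f - g ∈ I_S`. Conversely each generator `δ_t - v` rewrites to `0` in one step, scalar multiples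
of rewrite sequences are rewrite sequences, and the set of elements rewriting to `0` is closed
under addition: since `v t = 0` for every rule, applying a rule commutes with adding `g` up to
one further application of the same rule, and confluence glues the resulting joins together.
-/

open Relation

section Rewriting

variable {k W : Type*} [Field k] {S : Set (W × (W →₀ k))}

/-- The result of applying the rule `t → v` to `f`; `RewStep S f g` says `g = applyRule t v f`
for some rule `(t, v) ∈ S` with `f t ≠ 0`. -/
noncomputable def applyRule (t : W) (v f : W →₀ k) : W →₀ k :=
  f - Finsupp.single t (f t) + f t • v

lemma applyRule_eq_sub_smul (t : W) (v f : W →₀ k) :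
    applyRule t v f = f - f t • (Finsupp.single t 1 - v) := by
  rw [applyRule, smul_sub, Finsupp.smul_single_one]
  abel

lemma applyRule_add (t : W) (v f g : W →₀ k) :
    applyRule t v (f + g) = applyRule t v f + applyRule t v g := by
  simp only [applyRule_eq_sub_smul, Finsupp.add_apply, add_smul]
  abel

lemma applyRule_smul (t : W) (v f : W →₀ k) (c : k) :
    applyRule t v (c • f) = c • applyRule t v f := by
  simp only [applyRule_eq_sub_smul, Finsupp.smul_apply, smul_eq_mul, smul_sub, mul_smul]

lemma applyRule_of_apply_eq_zero {t : W} (v : W →₀ k) {f : W →₀ k} (hf : f t = 0) :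
    applyRule t v f = f := by
  simp [applyRule_eq_sub_smul, hf]

lemma applyRule_apply_self {t : W} {v : W →₀ k} (hv : v t = 0) (f : W →₀ k) :
    applyRule t v f t = 0 := by
  simp [applyRule, hv]

lemma applyRule_single_one_sub {t : W} {v : W →₀ k} (hv : v t = 0) :
    applyRule t v (Finsupp.single t 1 - v) = 0 := by
  simp [applyRule_eq_sub_smul, hv]

lemma reflTransGen_applyRule {t : W} {v : W →₀ k} (hr : (t, v) ∈ S) (f : W →₀ k) :
    ReflTransGen (RewStep S) f (applyRule t v f) := by
  by_cases hf : f t = 0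
  · rw [applyRule_of_apply_eq_zero v hf]
  · exact .single ⟨t, v, hr, hf, rfl⟩

lemma RewStep.smul {f g : W →₀ k} {c : k} (hc : c ≠ 0) (h : RewStep S f g) :
    RewStep S (c • f) (c • g) := by
  obtain ⟨t, v, hr, hf, rfl⟩ := h
  exact ⟨t, v, hr, by simpa using mul_ne_zero hc hf, (applyRule_smul t v f c).symm⟩

lemma reflTransGen_rewStep_smul {f g : W →₀ k} (c : k)
    (h : ReflTransGen (RewStep S) f g) : ReflTransGen (RewStep S) (c • f) (c • g) := by
  rcases eq_or_ne c 0 with rfl | hc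
  · simp only [zero_smul, ReflTransGen.refl]
  · induction h with
    | refl => exact .refl
    | tail _ hstep ih => exact ih.tail (hstep.smul hc)

lemma eq_zero_of_reflTransGen_rewStep_zero {g : W →₀ k}
    (h : ReflTransGen (RewStep S) 0 g) : g = 0 := by
  induction h with
  | refl => rfl
  | tail _ hstep ih =>
    subst ih
    obtain ⟨t, v, -, h0, -⟩ := hstep
    exact absurd rfl h0

lemma sub_mem_rewIdeal_of_rewStep {f g : W →₀ k} (h : RewStep S f g) : f - g ∈ RewIdeal S := by
  obtain ⟨t, v, hr, -, rfl⟩ := h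
  rw [← applyRule, applyRule_eq_sub_smul, sub_sub_cancel]
  exact (RewIdeal S).smul_mem _ (Submodule.subset_span ⟨(t, v), hr, rfl⟩)

lemma sub_mem_rewIdeal_of_reflTransGen {f g : W →₀ k} (h : ReflTransGen (RewStep S) f g) :
    f - g ∈ RewIdeal S := by
  induction h with
  | refl => simp
  | @tail g g' _ hstep ih =>
    rw [← sub_add_sub_cancel f g g']
    exact (RewIdeal S).add_mem ih (sub_mem_rewIdeal_of_rewStep hstep)

variable (hS : ∀ t v, (t, v) ∈ S → v t = 0)
include hS

lemma RewStep.join_add {f f' : W →₀ k} (h : RewStep S f f') (g : W →₀ k) :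
    Join (ReflTransGen (RewStep S)) (f + g) (f' + g) := by
  obtain ⟨t, v, hr, -, rfl⟩ := h
  rw [← applyRule]
  refine ⟨applyRule t v (f + g), reflTransGen_applyRule hr _, ?_⟩
  have hidem : applyRule t v (applyRule t v f) = applyRule t v f :=
    applyRule_of_apply_eq_zero v (applyRule_apply_self (hS t v hr) f)
  simpa only [applyRule_add, hidem] using reflTransGen_applyRule hr (applyRule t v f + g)

lemma join_add_of_reflTransGen (hconf : RewConfluent S) {f f' : W →₀ k}
    (h : ReflTransGen (RewStep S) f f') (g : W →₀ k) :
    Join (ReflTransGen (RewStep S)) (f + g) (f' + g) := by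
  induction h with
  | refl => exact ⟨f + g, .refl, .refl⟩
  | @tail f' f'' _ hstep ih =>
    obtain ⟨h₁, hfg, hf'g⟩ := ih
    obtain ⟨h₂, hf'g₂, hf''g⟩ := hstep.join_add hS g
    obtain ⟨h₃, h₁₃, h₂₃⟩ := hconf (f' + g) h₁ h₂ hf'g hf'g₂
    exact ⟨h₃, hfg.trans h₁₃, hf''g.trans h₂₃⟩

lemma reflTransGen_add_zero (hconf : RewConfluent S) {f g : W →₀ k}
    (hf : ReflTransGen (RewStep S) f 0) (hg : ReflTransGen (RewStep S) g 0) :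
    ReflTransGen (RewStep S) (f + g) 0 := by
  obtain ⟨h, hfg, hg'⟩ := join_add_of_reflTransGen hS hconf hf g
  rw [zero_add] at hg'
  obtain ⟨h', hh, h0⟩ := hconf g h 0 hg' hg
  rw [eq_zero_of_reflTransGen_rewStep_zero h0] at hh
  exact hfg.trans hh

lemma reflTransGen_zero_of_mem_rewIdeal (hconf : RewConfluent S) {f : W →₀ k}
    (hf : f ∈ RewIdeal S) : ReflTransGen (RewStep S) f 0 := by
  induction hf using Submodule.span_induction with
  | mem x hx =>
    obtain ⟨⟨t, v⟩, hr, rfl⟩ := hx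
    have h := reflTransGen_applyRule hr (Finsupp.single t 1 - v)
    rwa [applyRule_single_one_sub (hS t v hr)] at h
  | zero => exact .refl
  | add x y _ _ hx hy => exact reflTransGen_add_zero hS hconf hx hy
  | smul c x _ hx => simpa using reflTransGen_rewStep_smul c hx

end Rewriting

lemma RewCompatible.apply_fst_eq_zero {k W : Type*} [Field k] [LinearOrder W]
    {S : Set (W × (W →₀ k))} (hS : RewCompatible S) : ∀ t v, (t, v) ∈ S → v t = 0 :=
  fun t v hr => Finsupp.notMem_support_iff.1 fun ht => lt_irrefl t (hS (t, v) hr t ht)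

theorem mem_ideal_iff_rewrites_to_zero_general {k W : Type*} [Field k] [LinearOrder W]
    (S : Set (W × (W →₀ k))) (hS : RewCompatible S)
    (hc : RewConfluent S) (f : W →₀ k) :
    f ∈ RewIdeal S ↔ Relation.ReflTransGen (RewStep S) f 0 :=
  ⟨reflTransGen_zero_of_mem_rewIdeal hS.apply_fst_eq_zero hc,
    fun h => by simpa using sub_mem_rewIdeal_of_reflTransGen h⟩

/-- For a confluent `≤`-compatible rewriting system over a well-ordered set,
`f ∈ I_S` if and only if `f` rewrites to `0`. -/
theorem mem_ideal_iff_rewrites_to_zero {k W : Type*} [Field k] [LinearOrder W]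
    [WellFoundedLT W] (S : Set (W × (W →₀ k))) (hS : RewCompatible S)
    (hc : RewConfluent S) (f : W →₀ k) :
    f ∈ RewIdeal S ↔ Relation.ReflTransGen (RewStep S) f 0 :=
  mem_ideal_iff_rewrites_to_zero_general S hS hc f
end

section
/- Let ≤ be a well-order on W and let Π be a ≤-compatible term-rewriting system on V = W →₀ k. Then every nonzero f ∈ V admits a representation f = Σᵢ αᵢ·δ_{wᵢ} + Σⱼ βⱼ·(δ_{tⱼ} − vⱼ) (finite sums), where αᵢ, βⱼ ∈ k, each wᵢ ∈ Irr(Π) satisfies wᵢ ≤ w̄, each (tⱼ, vⱼ) ∈ Π satisfies tⱼ ≤ w̄, and w̄ denotes the ≤-maximum element of supp(f). -/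
/-! Every `δ_u` is a combination of irreducible `δ_w` and rule differences `δ_t - v` with
`w, t ≤ u`, by well-founded induction on `u`: either `u` is irreducible, or a rule `u → v`
gives `δ_u = (δ_u - v) + v` with `v` supported strictly below `u`. Summing over the support
of `f` gives the bound `w̄`. -/

theorem Submodule.exists_fin_sum_of_mem_span_image {R M ι : Type*} [Semiring R]
    [AddCommMonoid M] [Module R M] {e : ι → M} {s : Set ι} {x : M}
    (hx : x ∈ Submodule.span R (e '' s)) :
    ∃ (n : ℕ) (a : Fin n → R) (i : Fin n → ι), (∀ j, i j ∈ s) ∧ ∑ j, a j • e (i j) = x := by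
  obtain ⟨n, a, g, rfl⟩ := Submodule.mem_span_set'.1 hx
  choose i hi hie using fun j => (g j).2
  exact ⟨n, a, i, hi, by simp only [hie]⟩

namespace RewSystem

open Finsupp Submodule

variable {k W : Type*} [Field k] [LinearOrder W] {S : Set (W × (W →₀ k))}

variable (S) in
noncomputable def boundedSpan (c : W) : Submodule k (W →₀ k) :=
  span k ((fun w => single w 1) '' {w | w ∈ RewIrr S ∧ w ≤ c}) ⊔
    span k ((fun p => single p.1 1 - p.2) '' {p | p ∈ S ∧ p.1 ≤ c})

theorem boundedSpan_mono : Monotone (boundedSpan S) := fun _ _ hcd =>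
  sup_le_sup (span_mono (Set.image_mono fun _ hw => ⟨hw.1, hw.2.trans hcd⟩))
    (span_mono (Set.image_mono fun _ hp => ⟨hp.1, hp.2.trans hcd⟩))

theorem single_one_mem_boundedSpan [WellFoundedLT W] (hS : RewCompatible S) (u : W) :
    single u 1 ∈ boundedSpan S u := by
  induction u using WellFoundedLT.induction with
  | ind u ih =>
    by_cases hu : u ∈ RewIrr S
    · exact mem_sup_left (subset_span ⟨u, ⟨hu, le_rfl⟩, rfl⟩)
    obtain ⟨v, huv⟩ : ∃ v, (u, v) ∈ S := by simpa [RewIrr] using hu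
    have hrule : single u 1 - v ∈ boundedSpan S u :=
      mem_sup_right (subset_span ⟨(u, v), ⟨huv, le_rfl⟩, rfl⟩)
    have hv : v ∈ boundedSpan S u := by
      have hv_supp : v ∈ supported k k (Set.Iio u) := fun w hw => hS _ huv w hw
      rw [supported_eq_span_single] at hv_supp
      refine span_le.2 ?_ hv_supp
      rintro _ ⟨w, hwu, rfl⟩
      exact boundedSpan_mono (le_of_lt hwu) (ih w hwu)
    simpa using add_mem hrule hv

theorem supported_Iic_le_boundedSpan [WellFoundedLT W] (hS : RewCompatible S) (c : W) :
    supported k k (Set.Iic c) ≤ boundedSpan S c := by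
  rw [supported_eq_span_single, span_le]
  rintro _ ⟨w, hwc, rfl⟩
  exact boundedSpan_mono hwc (single_one_mem_boundedSpan hS w)

theorem exists_representation_of_mem_boundedSpan {c : W} {f : W →₀ k}
    (hf : f ∈ boundedSpan S c) :
    ∃ (n m : ℕ) (α : Fin n → k) (w : Fin n → W) (β : Fin m → k) (t : Fin m → W)
      (v : Fin m → (W →₀ k)),
      (∀ i, w i ∈ RewIrr S ∧ w i ≤ c) ∧
      (∀ j, (t j, v j) ∈ S ∧ t j ≤ c) ∧
      f = (∑ i, α i • single (w i) (1 : k)) + ∑ j, β j • (single (t j) (1 : k) - v j) := by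
  obtain ⟨y, hy, z, hz, rfl⟩ := mem_sup.1 hf
  obtain ⟨n, α, w, hw, rfl⟩ := exists_fin_sum_of_mem_span_image hy
  obtain ⟨m, β, p, hp, rfl⟩ := exists_fin_sum_of_mem_span_image hz
  exact ⟨n, m, α, w, β, fun j => (p j).1, fun j => (p j).2, hw, hp, rfl⟩

end RewSystem

theorem exists_representation_general {k W : Type*} [Field k] [LinearOrder W] [WellFoundedLT W]
    (S : Set (W × (W →₀ k))) (hS : RewCompatible S) (f : W →₀ k)
    (wbar : W) (hbar : wbar ∈ f.support ∧ ∀ w ∈ f.support, w ≤ wbar) :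
    ∃ (n m : ℕ) (α : Fin n → k) (w : Fin n → W) (β : Fin m → k) (t : Fin m → W)
      (v : Fin m → (W →₀ k)),
      (∀ i, w i ∈ RewIrr S ∧ w i ≤ wbar) ∧
      (∀ j, (t j, v j) ∈ S ∧ t j ≤ wbar) ∧
      f = (∑ i, α i • Finsupp.single (w i) (1 : k)) +
            ∑ j, β j • (Finsupp.single (t j) (1 : k) - v j) := by
  have hf : f ∈ Finsupp.supported k k (Set.Iic wbar) := fun w hw => hbar.2 w hw
  exact RewSystem.exists_representation_of_mem_boundedSpan
    (RewSystem.supported_Iic_le_boundedSpan hS wbar hf)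

/-- For a `≤`-compatible rewriting system over a well-ordered set, every nonzero `f`
admits a representation `f = Σᵢ αᵢ·δ_{wᵢ} + Σⱼ βⱼ·(δ_{tⱼ} − vⱼ)`, where each
`wᵢ ∈ Irr(S)` satisfies `wᵢ ≤ w̄`, each `(tⱼ, vⱼ) ∈ S` satisfies `tⱼ ≤ w̄`, and `w̄`
is the maximum element of the support of `f`. -/
theorem exists_representation {k W : Type*} [Field k] [LinearOrder W] [WellFoundedLT W]
    (S : Set (W × (W →₀ k))) (hS : RewCompatible S) (f : W →₀ k) (hf : f ≠ 0)
    (wbar : W) (hbar : wbar ∈ f.support ∧ ∀ w ∈ f.support, w ≤ wbar) :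
    ∃ (n m : ℕ) (α : Fin n → k) (w : Fin n → W) (β : Fin m → k) (t : Fin m → W)
      (v : Fin m → (W →₀ k)),
      (∀ i, w i ∈ RewIrr S ∧ w i ≤ wbar) ∧
      (∀ j, (t j, v j) ∈ S ∧ t j ≤ wbar) ∧
      f = (∑ i, α i • Finsupp.single (w i) (1 : k)) +
            ∑ j, β j • (Finsupp.single (t j) (1 : k) - v j) :=
  exists_representation_general S hS f wbar hbar
end

section
/- Let ≤ be a well-order on W and let Π be a ≤-compatible term-rewriting system on V = W →₀ k. If Π is confluent, then every f ∈ V has a unique normal form: there exists a unique g ∈ k·Irr(Π) with f →*_Π g. -/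
/-!
A rewriting step `f → f - f(t)δ_t + f(t)v` leaves the coefficients above `t` unchanged and kills
the coefficient at `t`, since `supp v` lies below `t`. So every step decreases `f` in the
lexicographic order that reads coefficients from the top of the well-order `W` down and only
distinguishes zero from nonzero; that order is well-founded, hence rewriting terminates and every
`f` reaches an element on which no rule applies, i.e. an element of `k·Irr(S)`. Two such elements
reachable from `f` are joinable by confluence, and being irreducible they coincide.
-/

open Relation

theorem Relation.exists_reflTransGen_forall_not {α : Type*} {r : α → α → Prop}
    (hr : WellFounded (flip r)) (a : α) : ∃ b, ReflTransGen r a b ∧ ∀ c, ¬ r b c := by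
  obtain ⟨b, hab, hmin⟩ := hr.has_min {b | ReflTransGen r a b} ⟨a, .refl⟩
  exact ⟨b, hab, fun c hbc => hmin c (hab.tail hbc) hbc⟩

section Rewriting

variable {k W : Type*} [Field k] {S : Set (W × (W →₀ k))}

theorem mem_rewIrrSpan_iff {g : W →₀ k} : g ∈ RewIrrSpan S ↔ ↑g.support ⊆ RewIrr S := by
  rw [RewIrrSpan, ← Finsupp.supported_eq_span_single, Finsupp.mem_supported]

theorem forall_not_rewStep_iff {f : W →₀ k} :
    (∀ g, ¬ RewStep S f g) ↔ ↑f.support ⊆ RewIrr S := by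
  constructor
  · intro hf t ht v hv
    exact hf _ ⟨t, v, hv, Finsupp.mem_support_iff.mp ht, rfl⟩
  · rintro hf g ⟨t, v, hv, hft, -⟩
    exact hf (Finsupp.mem_support_iff.mpr hft) v hv

theorem RewStep.lex [LinearOrder W] (hS : RewCompatible S) {f g : W →₀ k}
    (h : RewStep S f g) : Finsupp.Lex (· > ·) (fun a b : k => a = 0 ∧ b ≠ 0) g f := by
  obtain ⟨t, v, hv, hft, rfl⟩ := h
  have hv_above : ∀ j, t ≤ j → v j = 0 := fun j htj =>
    Finsupp.notMem_support_iff.mp fun hj => (hS (t, v) hv j hj).not_ge htj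
  refine ⟨t, fun j hj => ?_, ?_, hft⟩
  · simp [hj.ne', hv_above j hj.le]
  · simp [hv_above t le_rfl]

theorem wellFounded_flip_rewStep [LinearOrder W] [WellFoundedLT W] (hS : RewCompatible S) :
    WellFounded (flip (RewStep S)) := by
  refine Subrelation.wf (fun h => RewStep.lex hS h) (Finsupp.Lex.wellFounded' ?_ ?_ wellFounded_lt)
  · exact fun _ h => h.2 rfl
  · exact ⟨fun b => ⟨b, fun a ha => ⟨a, fun c hc => absurd ha.1 hc.2⟩⟩⟩

end Rewriting

/-- For a confluent `≤`-compatible rewriting system over a well-ordered set, every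
element has a unique normal form: a unique `g ∈ k·Irr(S)` with `f →* g`. -/
theorem unique_normal_form {k W : Type*} [Field k] [LinearOrder W] [WellFoundedLT W]
    (S : Set (W × (W →₀ k))) (hS : RewCompatible S) (hc : RewConfluent S) (f : W →₀ k) :
    ∃! g : W →₀ k, g ∈ RewIrrSpan S ∧ Relation.ReflTransGen (RewStep S) f g := by
  obtain ⟨g, hfg, hg⟩ := exists_reflTransGen_forall_not (wellFounded_flip_rewStep hS) f
  refine ⟨g, ⟨mem_rewIrrSpan_iff.mpr (forall_not_rewStep_iff.mp hg), hfg⟩, ?_⟩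
  rintro g' ⟨hg'_irr, hfg'⟩
  have hg' : ∀ h, ¬ RewStep S g' h := forall_not_rewStep_iff.mpr (mem_rewIrrSpan_iff.mp hg'_irr)
  obtain ⟨h, hg'h, hgh⟩ := hc f g' g hfg' hfg
  rw [reflTransGen_iff_eq hg'] at hg'h
  rw [reflTransGen_iff_eq hg] at hgh
  rw [← hg'h, hgh]
end
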